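/- arXiv:math/0609629 — 4 statements merged into one kernel-verified Lean document; each statement's English description precedes it below -/
import Mathlib

section
/- Let n ≥ 3 and let e be a positive rational. Let A be the n×n symmetric matrix with a_{i,i} = −2 and a_{i,n} = a_{n,i} = 1 for all i ≤ n−1, a_{i,j} = 0 for all distinct i, j ≤ n−1, and a_{n,n} = −e. Then: (1) A is negative definite if and only if e > (n−1)/2; (2) assuming e > (n−1)/2, A satisfies (NN) if and only if e > n/2. -/
/-- `A` is negative definite: `xᵀAx < 0` for every nonzero real vector `x`. -/
def NegDefQ {V : Type*} [Fintype V] (A : Matrix V V ℚ) : Prop :=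
  ∀ x : V → ℝ, x ≠ 0 → ∑ i, ∑ j, x i * (A i j : ℝ) * x j < 0

/-- Numerical Nash condition `NN_(i,j)`: for every rational vector `C` with nonpositive
entries there is an integer vector `X` with positive entries such that `(AX)_k ≤ C_k`
for all `k` and `X i < X j`. -/
def NashNN {V : Type*} [Fintype V] (A : Matrix V V ℚ) (i j : V) : Prop :=
  ∀ C : V → ℚ, (∀ k, C k ≤ 0) →
    ∃ X : V → ℤ, (∀ k, 0 < X k) ∧ (∀ k, ∑ t, A k t * (X t : ℚ) ≤ C k) ∧ X i < X j

/-- Condition `(NN)`: `NN_(i,j)` for every ordered pair of distinct indices. -/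
def NashNNAll {V : Type*} [Fintype V] (A : Matrix V V ℚ) : Prop :=
  ∀ i j : V, i ≠ j → NashNN A i j

/-! With `r` the centre, `xᵀAx = -2 ∑_{i ≠ r} (x i - x r / 2)² - (e - (n - 1)/2) (x r)²`, which
gives the negative-definiteness criterion. A solution of `AX ≤ 0` has `X r ≤ 2 X k` on every leaf
and `∑_{k ≠ r} X k ≤ e X r`; if moreover some leaf exceeds `X r`, summing gives `n X r < 2 e X r`.
Conversely, if `2e > n` and `-C ≤ D`, put the leaves at `m`, the centre at `2m - D` and `j` at
`2m - D + 1`: the leaf rows are `≤ -D`, and the centre row is `≤ -D` as soon as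
`(2e - n) m ≥ 1 + e D`. -/

open Finset

section StarMatrix

variable {V : Type*} [DecidableEq V] {K : Type*}

def starMatrix [Ring K] (e : K) (r : V) : Matrix V V K :=
  Matrix.of fun i j =>
    if i = j then (if i = r then -e else -2) else (if i = r ∨ j = r then 1 else 0)

theorem map_starMatrix_apply {L F : Type*} [Ring K] [Ring L] [FunLike F K L] [RingHomClass F K L]
    (f : F) (e : K) (r i j : V) : f (starMatrix e r i j) = starMatrix (f e) r i j := by
  simp only [starMatrix, Matrix.of_apply]
  split_ifs <;> simp [map_ofNat f 2]

def starWitness (r j : V) (D m : ℕ) : V → ℤ := fun k =>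
  if k = r then 2 * m - D else if k = j then 2 * m - D + 1 else m

theorem le_starWitness {r j : V} {D m : ℕ} (hDm : D ≤ m) (k : V) :
    (m : ℤ) ≤ starWitness r j D m k := by
  unfold starWitness
  split_ifs <;> omega

theorem starWitness_lt {r i j : V} {D m : ℕ} (hDm : D < m) (hij : i ≠ j) :
    starWitness r j D m i < starWitness r j D m j := by
  unfold starWitness
  split_ifs <;> first | omega | simp_all

variable [Fintype V]

theorem sum_starMatrix_mul_of_ne [Ring K] (e : K) {r k : V} (hk : k ≠ r) (x : V → K) :
    ∑ t, starMatrix e r k t * x t = -2 * x k + x r := by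
  rw [Fintype.sum_eq_add k r hk]
  · simp [starMatrix, hk]
  · rintro t ⟨htk, htr⟩
    simp [starMatrix, hk, Ne.symm htk, htr]

theorem sum_starMatrix_mul_self [Ring K] (e : K) (r : V) (x : V → K) :
    ∑ t, starMatrix e r r t * x t = ∑ t ∈ univ.erase r, x t - e * x r := by
  rw [← add_sum_erase _ _ (mem_univ r)]
  have hoff : ∀ t ∈ univ.erase r, starMatrix e r r t * x t = x t := fun t ht => by
    simp [starMatrix, Ne.symm (ne_of_mem_erase ht)]
  rw [sum_congr rfl hoff]
  simp only [starMatrix, Matrix.of_apply, ↓reduceIte, neg_mul, neg_add_eq_sub]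

theorem quadForm_starMatrix [Field K] [CharZero K] (e : K) (r : V) (x : V → K) :
    ∑ i, ∑ j, x i * starMatrix e r i j * x j =
      -2 * ∑ i ∈ univ.erase r, (x i - x r / 2) ^ 2
        - (e - ((Fintype.card V : K) - 1) / 2) * x r ^ 2 := by
  have hrow : ∀ i,
      ∑ j, x i * starMatrix e r i j * x j = x i * ∑ j, starMatrix e r i j * x j :=
    fun i => by simp only [mul_sum, mul_assoc]
  have hleaves : ∀ i ∈ univ.erase r,
      x i * ∑ j, starMatrix e r i j * x j = -2 * x i ^ 2 + x r * x i := fun i hi => by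
    rw [sum_starMatrix_mul_of_ne e (ne_of_mem_erase hi)]; ring
  rw [sum_congr rfl fun i _ => hrow i, ← add_sum_erase _ _ (mem_univ r), sum_congr rfl hleaves,
    sum_starMatrix_mul_self]
  simp only [sub_sq, sum_add_distrib, sum_sub_distrib, ← mul_sum, ← sum_mul, sum_const,
    nsmul_eq_mul, cast_card_erase_of_mem (mem_univ r), card_univ]
  ring

theorem quadForm_starMatrix_neg_iff [Field K] [LinearOrder K] [IsStrictOrderedRing K]
    (e : K) (r : V) :
    (∀ x : V → K, x ≠ 0 → ∑ i, ∑ j, x i * starMatrix e r i j * x j < 0) ↔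
      ((Fintype.card V : K) - 1) / 2 < e := by
  simp only [quadForm_starMatrix]
  constructor
  · intro h
    -- on this vector the sum of squares vanishes
    have hx : (fun i => if i = r then (2 : K) else 1) ≠ 0 := fun h0 => by
      simpa using congrFun h0 r
    have := h _ hx
    rw [sum_eq_zero fun i hi => by simp [ne_of_mem_erase hi], if_pos rfl] at this
    linarith
  · intro h x hx
    have hsq : 0 ≤ ∑ i ∈ univ.erase r, (x i - x r / 2) ^ 2 :=
      sum_nonneg fun i _ => sq_nonneg _
    by_cases hxr : x r = 0
    · obtain ⟨i, hi⟩ := Function.ne_iff.mp hx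
      have hir : i ≠ r := by rintro rfl; exact hi hxr
      have : 0 < ∑ i ∈ univ.erase r, (x i - x r / 2) ^ 2 := by
        refine sum_pos' (fun i _ => sq_nonneg _) ⟨i, mem_erase.mpr ⟨hir, mem_univ i⟩, ?_⟩
        rw [hxr, zero_div, sub_zero]
        exact sq_pos_of_ne_zero hi
      rw [hxr] at this ⊢
      linarith
    · linarith [mul_pos (sub_pos.mpr h) (sq_pos_of_ne_zero hxr)]

theorem negDefQ_starMatrix_iff (e : ℚ) (r : V) :
    NegDefQ (starMatrix e r) ↔ ((Fintype.card V : ℚ) - 1) / 2 < e := by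
  have hcast : ∀ i j, ((starMatrix e r i j : ℚ) : ℝ) = starMatrix (e : ℝ) r i j :=
    map_starMatrix_apply (Rat.castHom ℝ) e r
  simp only [NegDefQ, hcast, quadForm_starMatrix_neg_iff]
  exact_mod_cast Iff.rfl

theorem lt_of_nashNN_starMatrix {e : ℚ} {r j : V} (hj : j ≠ r)
    (h : NashNN (starMatrix e r) r j) :
    (Fintype.card V : ℚ) / 2 < e := by
  obtain ⟨X, hpos, hle, hlt⟩ := h 0 fun _ => le_rfl
  have hleaf : ∀ k ∈ univ.erase r, (X r : ℚ) ≤ 2 * X k := fun k hk => by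
    have := hle k
    rw [sum_starMatrix_mul_of_ne e (ne_of_mem_erase hk)] at this
    simp only [Pi.zero_apply] at this
    linarith
  have hcenter : ∑ k ∈ univ.erase r, (X k : ℚ) ≤ e * X r := by
    have := hle r
    rw [sum_starMatrix_mul_self] at this
    simp only [Pi.zero_apply] at this
    linarith
  have hj' : (X r : ℚ) + 1 ≤ X j := by exact_mod_cast hlt
  have hr : (0 : ℚ) < X r := by exact_mod_cast hpos r
  have hsum : (Fintype.card V : ℚ) * X r < 2 * ∑ k ∈ univ.erase r, (X k : ℚ) := by
    have : ∑ k ∈ univ.erase r, ((X r : ℚ) + if k = j then (X r : ℚ) + 2 else 0) ≤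
        ∑ k ∈ univ.erase r, 2 * (X k : ℚ) := by
      refine sum_le_sum fun k hk => ?_
      split_ifs with hkj
      · subst hkj; linarith
      · linarith [hleaf k hk]
    rw [sum_add_distrib, sum_const, sum_ite_eq', if_pos (mem_erase.mpr ⟨hj, mem_univ j⟩),
      nsmul_eq_mul, cast_card_erase_of_mem (mem_univ r), card_univ, ← mul_sum] at this
    linarith
  nlinarith

theorem sum_starMatrix_mul_starWitness_le {e : ℚ} {r : V} (j : V) {D m : ℕ} (hDm : D ≤ m)
    (hm : 1 + e * D ≤ (2 * e - Fintype.card V) * m) (k : V) :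
    ∑ t, starMatrix e r k t * (starWitness r j D m t : ℚ) ≤ -D := by
  have hXr : (starWitness r j D m r : ℚ) = 2 * m - D := by simp [starWitness]
  by_cases hk : k = r
  · subst hk
    have hleaves : ∑ t ∈ univ.erase k, (starWitness k j D m t : ℚ) ≤
        (Fintype.card V - 1) * m + (m - D + 1) := by
      have : ∑ t ∈ univ.erase k, (starWitness k j D m t : ℚ) ≤
          ∑ t ∈ univ.erase k, ((m : ℚ) + if t = j then (m : ℚ) - D + 1 else 0) := by
        refine sum_le_sum fun t ht => ?_
        simp only [starWitness, if_neg (ne_of_mem_erase ht)]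
        split_ifs <;> push_cast <;> linarith
      rw [sum_add_distrib, sum_const, sum_ite_eq', nsmul_eq_mul,
        cast_card_erase_of_mem (mem_univ k), card_univ] at this
      have : (0 : ℚ) ≤ m - D + 1 := by linarith [show (D : ℚ) ≤ m by exact_mod_cast hDm]
      split_ifs at * <;> linarith
    rw [sum_starMatrix_mul_self, hXr]
    linarith
  · rw [sum_starMatrix_mul_of_ne e hk, hXr]
    have : (m : ℚ) ≤ starWitness r j D m k := by exact_mod_cast le_starWitness hDm k
    linarith

theorem nashNN_starMatrix {e : ℚ} {r : V} (he : (Fintype.card V : ℚ) / 2 < e) {i j : V}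
    (hij : i ≠ j) : NashNN (starMatrix e r) i j := by
  intro C _
  obtain ⟨D, hD⟩ : ∃ D : ℕ, ∀ k, -C k ≤ D := by
    obtain ⟨M, hM⟩ := Finite.exists_le fun k => -C k
    obtain ⟨D, hD⟩ := exists_nat_ge M
    exact ⟨D, fun k => (hM k).trans hD⟩
  obtain ⟨m, hm⟩ := exists_nat_gt (max (D : ℚ) ((1 + e * D) / (2 * e - Fintype.card V)))
  rw [max_lt_iff, div_lt_iff₀ (by linarith)] at hm
  have hDm : D < m := by exact_mod_cast hm.1
  refine ⟨starWitness r j D m, fun k => ?_, fun k => ?_, starWitness_lt hDm hij⟩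
  · have := le_starWitness (r := r) (j := j) hDm.le k
    omega
  · linarith [sum_starMatrix_mul_starWitness_le (r := r) j hDm.le (by linarith [hm.2]) k, hD k]

theorem nashNNAll_starMatrix_iff {e : ℚ} {r : V} (hV : 2 ≤ Fintype.card V) :
    NashNNAll (starMatrix e r) ↔ (Fintype.card V : ℚ) / 2 < e := by
  refine ⟨fun h => ?_, fun he i j hij => nashNN_starMatrix he hij⟩
  have : Nontrivial V := Fintype.one_lt_card_iff_nontrivial.mp hV
  obtain ⟨j, hj⟩ := exists_ne r
  exact lt_of_nashNN_starMatrix hj (h r j hj.symm)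

end StarMatrix

theorem star_minus_two_NN_general (n : ℕ) (hn : 3 ≤ n) (e : ℚ)
    (A : Matrix (Fin n) (Fin n) ℚ) (r : Fin n)
    (hA : ∀ i j : Fin n, A i j =
      if i = j then (if i = r then -e else -2) else (if i = r ∨ j = r then 1 else 0)) :
    (NegDefQ A ↔ ((n : ℚ) - 1) / 2 < e) ∧
    (((n : ℚ) - 1) / 2 < e → (NashNNAll A ↔ (n : ℚ) / 2 < e)) := by
  obtain rfl : A = starMatrix e r := Matrix.ext hA
  have hnegdef := negDefQ_starMatrix_iff e r
  have hnash := nashNNAll_starMatrix_iff (e := e) (r := r) (by rw [Fintype.card_fin]; omega)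
  rw [Fintype.card_fin] at hnegdef hnash
  exact ⟨hnegdef, fun _ => hnash⟩

theorem star_minus_two_NN (n : ℕ) (hn : 3 ≤ n) (e : ℚ) (he : 0 < e)
    (A : Matrix (Fin n) (Fin n) ℚ) (r : Fin n) (hr : (r : ℕ) = n - 1)
    (hA : ∀ i j : Fin n, A i j =
      if i = j then (if i = r then -e else -2) else (if i = r ∨ j = r then 1 else 0)) :
    (NegDefQ A ↔ ((n : ℚ) - 1) / 2 < e) ∧
    (((n : ℚ) - 1) / 2 < e → (NashNNAll A ↔ (n : ℚ) / 2 < e)) :=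
  star_minus_two_NN_general n hn e A r hA
end

section
/- Let I be a subset of {1, …, n} with at least two elements and let A_I be the principal submatrix of A with rows and columns indexed by I (A_I again is symmetric, negative definite, with negative diagonal and nonnegative off-diagonal entries). If i, j ∈ I are distinct and A satisfies NN_{(i,j)}, then A_I satisfies the numerical Nash condition for the pair (i,j). In particular, if A satisfies (NN) then so does A_I. -/
theorem NN_of_submatrix (n : ℕ) (hn : 2 ≤ n) (A : Matrix (Fin n) (Fin n) ℚ)
    (hsym : ∀ i j, A i j = A j i) (hdiag : ∀ i, A i i < 0)
    (hoff : ∀ i j, i ≠ j → 0 ≤ A i j) (hneg : NegDefQ A)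
    (I : Finset (Fin n)) (hI : 2 ≤ I.card) :
    (∀ (i j : Fin n) (hi : i ∈ I) (hj : j ∈ I), i ≠ j → NashNN A i j →
      NashNN (A.submatrix (fun p : ↥I => (p : Fin n)) (fun p : ↥I => (p : Fin n)))
        ⟨i, hi⟩ ⟨j, hj⟩) ∧
    (NashNNAll A →
      NashNNAll (A.submatrix (fun p : ↥I => (p : Fin n)) (fun p : ↥I => (p : Fin n)))) := by
  have main : ∀ (i j : Fin n) (hi : i ∈ I) (hj : j ∈ I), i ≠ j → NashNN A i j →
      NashNN (A.submatrix (fun p : ↥I => (p : Fin n)) (fun p : ↥I => (p : Fin n)))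
        ⟨i, hi⟩ ⟨j, hj⟩ := by
    intro i j hi hj hij hNN C hC
    obtain ⟨X, hXpos, hXle, hXij⟩ := hNN (fun k => if hk : k ∈ I then C ⟨k, hk⟩ else 0)
      (by intro k; split
          · exact hC _
          · exact le_refl 0)
    refine ⟨fun p => X ↑p, fun p => hXpos _, ?_, hXij⟩
    intro k
    have h1 : ∑ t : ↥I, A (↑k) (↑t) * ((X ↑t : ℤ) : ℚ) = ∑ t ∈ I, A (↑k) t * (X t : ℚ) := by
      rw [← Finset.sum_attach I (fun t => A (↑k) t * (X t : ℚ))]; rfl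
    have h2 : ∑ t ∈ I, A (↑k) t * (X t : ℚ) ≤ ∑ t, A (↑k) t * (X t : ℚ) := by
      apply Finset.sum_le_sum_of_subset_of_nonneg (Finset.subset_univ I)
      intro t _ htI
      have hne : (↑k : Fin n) ≠ t := fun h => htI (h ▸ k.2)
      have h4 := hoff _ _ hne
      have h5 : (0:ℚ) ≤ (X t : ℚ) := by exact_mod_cast (hXpos t).le
      positivity
    have h3 := hXle (↑k)
    simp only [k.2, dif_pos] at h3
    calc ∑ t : ↥I, A.submatrix (fun p : ↥I => (p : Fin n)) (fun p : ↥I => (p : Fin n)) k t * ((X ↑t : ℤ) : ℚ)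
        = ∑ t : ↥I, A (↑k) (↑t) * ((X ↑t : ℤ) : ℚ) := rfl
      _ = ∑ t ∈ I, A (↑k) t * (X t : ℚ) := h1
      _ ≤ ∑ t, A (↑k) t * (X t : ℚ) := h2
      _ ≤ C ⟨↑k, k.2⟩ := h3
      _ = C k := by congr
  refine ⟨main, fun h p q hpq => ?_⟩
  exact main p q p.2 q.2 (fun e => hpq (Subtype.ext e)) (h p q (fun e => hpq (Subtype.ext e)))
end

section
/- Fix an index k and let A′ be the matrix obtained from A by replacing the diagonal entry a_{k,k} with a_{k,k} − 1 (A′ again is symmetric, negative definite, with negative diagonal and nonnegative off-diagonal entries). If A satisfies NN_{(i,j)} for distinct indices i, j, then A′ satisfies NN_{(i,j)}. In particular, if A satisfies (NN) then so does A′. -/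
theorem NN_of_decreasing_diagonal (n : ℕ) (hn : 2 ≤ n) (A : Matrix (Fin n) (Fin n) ℚ)
    (hsym : ∀ i j, A i j = A j i) (hdiag : ∀ i, A i i < 0)
    (hoff : ∀ i j, i ≠ j → 0 ≤ A i j) (hneg : NegDefQ A)
    (k : Fin n) :
    (∀ i j : Fin n, i ≠ j → NashNN A i j →
      NashNN (Matrix.of fun p q : Fin n =>
        if p = k ∧ q = k then A k k - 1 else A p q) i j) ∧
    (NashNNAll A →
      NashNNAll (Matrix.of fun p q : Fin n =>
        if p = k ∧ q = k then A k k - 1 else A p q)) := by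
  have main : ∀ i j : Fin n, i ≠ j → NashNN A i j →
      NashNN (Matrix.of fun p q : Fin n =>
        if p = k ∧ q = k then A k k - 1 else A p q) i j := by
    intro i j hij h C hC
    obtain ⟨X, hXpos, hXle, hXij⟩ := h C hC
    refine ⟨X, hXpos, ?_, hXij⟩
    intro p
    refine le_trans ?_ (hXle p)
    apply Finset.sum_le_sum
    intro t _
    simp only [Matrix.of_apply]
    split_ifs with hpt
    · obtain ⟨hp, ht⟩ := hpt
      rw [hp, ht]
      have hx : (0:ℚ) ≤ (X k : ℚ) := by exact_mod_cast (hXpos k).le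
      nlinarith
    · exact le_rfl
  exact ⟨main, fun hall i j hij => main i j hij (hall i j hij)⟩
end

section
/- Let d = max_{i≠j} a_{i,j} and m = min_i (−a_{i,i}). If m > (n−1)·d, then A satisfies (NN). Moreover, for any positive rationals m, d with m > (n−1)·d, the n×n symmetric matrix M with all diagonal entries equal to −m and all off-diagonal entries equal to d is negative definite. -/
theorem diagonally_dominant_NN (n : ℕ) (hn : 2 ≤ n) (A : Matrix (Fin n) (Fin n) ℚ)
    (hsym : ∀ i j, A i j = A j i) (hdiag : ∀ i, A i i < 0)
    (hoff : ∀ i j, i ≠ j → 0 ≤ A i j) (hneg : NegDefQ A)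
    (d m : ℚ)
    (hd : IsGreatest {x : ℚ | ∃ i j : Fin n, i ≠ j ∧ A i j = x} d)
    (hm : IsLeast {x : ℚ | ∃ i : Fin n, -A i i = x} m) :
    (((n : ℚ) - 1) * d < m → NashNNAll A) ∧
    (∀ m' d' : ℚ, 0 < m' → 0 < d' → ((n : ℚ) - 1) * d' < m' →
      NegDefQ (Matrix.of fun i j : Fin n => if i = j then -m' else d')) := by
  constructor
  · -- Part 1
    intro hlt i j hij C hC
    set s : ℚ := m - ((n : ℚ) - 1) * d with hs_def
    have hs : 0 < s := by simp only [hs_def]; linarith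
    obtain ⟨⟨i0, j0, hij0, hd0eq⟩, hdub⟩ := hd
    have hd0 : 0 ≤ d := hd0eq ▸ hoff i0 j0 hij0
    have hAle : ∀ k t : Fin n, A k t ≤ d := by
      intro k t
      by_cases hkt : k = t
      · subst hkt; exact le_trans (hdiag k).le hd0
      · exact hdub ⟨k, t, hkt, rfl⟩
    have hmk : ∀ k : Fin n, A k k ≤ -m := by
      intro k
      have := hm.2 ⟨k, rfl⟩
      linarith
    -- row sums bound
    have hrow : ∀ k : Fin n, ∑ t, A k t ≤ -s := by
      intro k
      rw [← Finset.add_sum_erase _ _ (Finset.mem_univ k)]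
      have h1 : ∑ t ∈ Finset.univ.erase k, A k t ≤ ((n : ℚ) - 1) * d := by
        have := Finset.sum_le_card_nsmul (Finset.univ.erase k) (A k) d
          (fun t _ => hAle k t)
        have hcard : (Finset.univ.erase k).card = n - 1 := by
          rw [Finset.card_erase_of_mem (Finset.mem_univ k)]
          simp
        rw [hcard, nsmul_eq_mul] at this
        have hcast : ((n - 1 : ℕ) : ℚ) = (n : ℚ) - 1 := by
          have : 1 ≤ n := by omega
          push_cast [this]; ring
        rw [hcast] at this
        exact this
      have := hmk k
      simp only [hs_def]
      linarith
    -- choose N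
    set B : ℚ := d - ∑ k, C k with hB_def
    have hBk : ∀ k : Fin n, d - C k ≤ B := by
      intro k
      have h1 : ∑ t, C t ≤ C k := by
        rw [← Finset.add_sum_erase _ _ (Finset.mem_univ k)]
        have : ∑ t ∈ Finset.univ.erase k, C t ≤ 0 :=
          Finset.sum_nonpos fun t _ => hC t
        linarith
      simp only [hB_def]
      linarith
    set N : ℤ := max 1 ⌈B / s⌉ with hN_def
    have hN1 : 1 ≤ N := le_max_left _ _
    have hNpos : 0 < N := by omega
    have hNB : B ≤ (N : ℚ) * s := by
      have h1 : B / s ≤ ((⌈B / s⌉ : ℤ) : ℚ) := Int.le_ceil _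
      have h2 : ((⌈B / s⌉ : ℤ) : ℚ) ≤ (N : ℚ) := by
        exact_mod_cast le_max_right 1 ⌈B / s⌉
      rw [div_le_iff₀ hs] at h1
      have h3 : ((⌈B / s⌉ : ℤ) : ℚ) * s ≤ (N : ℚ) * s :=
        mul_le_mul_of_nonneg_right h2 hs.le
      exact h1.trans h3
    refine ⟨fun k => if k = j then N + 1 else N, ?_, ?_, ?_⟩
    · intro k; dsimp only; split <;> omega
    · intro k
      have hterm : ∀ t : Fin n,
          A k t * ((if t = j then N + 1 else N : ℤ) : ℚ)
            = A k t * (N : ℚ) + (if t = j then A k t else 0) := by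
        intro t
        split <;> push_cast <;> ring
      rw [Finset.sum_congr rfl (fun t _ => hterm t), Finset.sum_add_distrib,
        Finset.sum_ite_eq' Finset.univ j (A k), ← Finset.sum_mul]
      simp only [Finset.mem_univ, if_true]
      have h1 : (∑ t, A k t) * (N : ℚ) ≤ -s * (N : ℚ) := by
        apply mul_le_mul_of_nonneg_right (hrow k)
        exact_mod_cast hNpos.le
      have h2 : A k j ≤ d := hAle k j
      have h3 : d - C k ≤ (N : ℚ) * s := le_trans (hBk k) hNB
      nlinarith
    · dsimp only
      rw [if_neg hij, if_pos rfl]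
      omega
  · -- Part 2
    intro m' d' hm' hd' hlt x hx
    simp only [Matrix.of_apply]
    have hterm : ∀ i j : Fin n,
        x i * (((if i = j then -m' else d' : ℚ)) : ℝ) * x j
          = (d' : ℝ) * (x i * x j)
            + (if i = j then (-(m' : ℝ) - d') * (x i * x j) else 0) := by
      intro i j
      split <;> push_cast <;> ring
    have hsum : ∑ i, ∑ j, x i * (((if i = j then -m' else d' : ℚ)) : ℝ) * x j
        = (d' : ℝ) * (∑ i, x i) ^ 2 - ((m' : ℝ) + d') * ∑ i, x i ^ 2 := by
      have e1 : ∑ i, ∑ j, (d' : ℝ) * (x i * x j) = (d' : ℝ) * (∑ i, x i) ^ 2 := by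
        rw [sq, Finset.sum_mul_sum, Finset.mul_sum]
        exact Finset.sum_congr rfl fun i _ => by rw [Finset.mul_sum]
      have e2 : ∑ i : Fin n, ∑ j : Fin n,
          (if i = j then (-(m' : ℝ) - d') * (x i * x j) else 0)
            = (-(m' : ℝ) - d') * ∑ i, x i ^ 2 := by
        have h1 : ∀ i : Fin n,
            (∑ j : Fin n, if i = j then (-(m' : ℝ) - d') * (x i * x j) else 0)
              = (-(m' : ℝ) - d') * (x i * x i) := by
          intro i
          rw [Finset.sum_ite_eq Finset.univ i (fun j => (-(m' : ℝ) - d') * (x i * x j))]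
          simp
        simp only [h1, ← Finset.mul_sum, sq]
      simp only [hterm, Finset.sum_add_distrib]
      rw [e1, e2]
      ring
    rw [hsum]
    obtain ⟨i0, hi0⟩ : ∃ i, x i ≠ 0 := by
      by_contra h
      push_neg at h
      exact hx (funext h)
    have hS : 0 < ∑ i, x i ^ 2 :=
      Finset.sum_pos' (fun i _ => sq_nonneg _) ⟨i0, Finset.mem_univ i0, by positivity⟩
    have hCS : (∑ i, x i) ^ 2 ≤ (n : ℝ) * ∑ i, x i ^ 2 := by
      have := Finset.sum_mul_sq_le_sq_mul_sq Finset.univ (fun _ : Fin n => (1 : ℝ)) x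
      simpa [Finset.card_univ] using this
    have hlt' : ((n : ℝ) - 1) * (d' : ℝ) < (m' : ℝ) := by exact_mod_cast hlt
    have hd'' : (0 : ℝ) < (d' : ℝ) := by exact_mod_cast hd'
    nlinarith [mul_le_mul_of_nonneg_left hCS hd''.le]
end
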